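/- Fix an integer n ≥ 1. (i) Let d, d′ ∈ A have degree < n−1 and let h, h′ be standard lifts for (0,d), (0,d′) of level tⁿ. Then there exist γ ∈ Γ₁(tⁿ) and λ ∈ K^× with γ·h·(0,1)ᵀ = λ·h′·(0,1)ᵀ if and only if d = d′. (ii) Every nonzero vector v ∈ K² for which there exist δ ∈ Γ₁(t) and μ ∈ K^× with δv = μ·(0,1)ᵀ satisfies: there exist d ∈ A of degree < n−1, a standard lift h for (0,d), γ ∈ Γ₁(tⁿ) and λ ∈ K^× with γv = λ·h·(0,1)ᵀ. Thus the cusps h_{(0,d)}(0) with d ∈ A/(t^{n−1}) form a complete set of representatives of the cusps of Γ₁(tⁿ) lying over 0. -/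

import Mathlib

open Polynomial Matrix

/-- `Γ₁(𝔫)` as a set of 2×2 matrices over `A = F[t]`:
matrices of determinant 1 congruent to `[[1,*],[0,1]]` mod `𝔫`. -/
def Gamma1 (F : Type*) [Field F] (n : Polynomial F) :
    Set (Matrix (Fin 2) (Fin 2) (Polynomial F)) :=
  {γ | γ.det = 1 ∧ n ∣ γ 1 0 ∧ n ∣ (γ 0 0 - 1) ∧ n ∣ (γ 1 1 - 1)}

/-- A standard lift `h = h_{(c,d)}` of level `tⁿ`: an element of `SL₂(A)` with
`h₁₂ ≡ 0`, `h₂₁ ≡ tc`, `h₂₂ ≡ 1 + td` and `h₁₁(1+td) ≡ 1 (mod tⁿ)`. -/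
def IsStdLift (F : Type*) [Field F] (n : ℕ) (c d : Polynomial F)
    (h : Matrix (Fin 2) (Fin 2) (Polynomial F)) : Prop :=
  h.det = 1 ∧ (X : Polynomial F) ^ n ∣ h 0 1 ∧
    (X : Polynomial F) ^ n ∣ (h 1 0 - X * c) ∧
    (X : Polynomial F) ^ n ∣ (h 1 1 - (1 + X * d)) ∧
    (X : Polynomial F) ^ n ∣ (h 0 0 * (1 + X * d) - 1)

/-!
Modulo `tⁿ` a standard lift for `(c, d)` is `[[(1 + td)⁻¹, 0], [tc, 1 + td]]`, so two standard
lifts for the same `(c, d)` differ by an element of `Γ₁(tⁿ)`. Conversely, if `γh(0,1)ᵀ` and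
`h'(0,1)ᵀ` are proportional over `K`, then `h'⁻¹γh ∈ SL₂(A)` fixes the line through `(0,1)ᵀ`, so
it is lower triangular and its `(2,2)` entry is a unit of `A`, i.e. a constant. As the `(2,2)`
entries of `γh` and `h'` are both `≡ 1 (mod t)`, that constant is `1`, and then
`1 + td ≡ 1 + td' (mod tⁿ)` forces `d = d'` when both have degree `< n - 1`.

For the second part, `v` is proportional to the second column `(a, b)` of `δ⁻¹`, where
`b ≡ 1 (mod t)`. As `b` is invertible modulo `tⁿ`, a translation `[[1, y], [0, 1]] ∈ Γ₁(tⁿ)`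
makes `a + yb` divisible by `tⁿ`, and a Bézout relation between `b` and `(a + yb)tⁿ` completes
the column `(a + yb, b)` to a standard lift.
-/

section
variable {R S : Type*} [CommRing R] [CommRing S]

theorem map_mulVec_zero_one (f : R →+* S) (M : Matrix (Fin 2) (Fin 2) R) :
    M.map f *ᵥ ![0, 1] = ![f (M 0 1), f (M 1 1)] := by
  ext i
  fin_cases i <;> simp [mulVec, dotProduct]

theorem map_adjugate_mulVec_map_mulVec (f : R →+* S) {M : Matrix (Fin 2) (Fin 2) R}
    (hM : M.det = 1) (v : Fin 2 → S) : (adjugate M).map f *ᵥ (M.map f *ᵥ v) = v := by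
  rw [mulVec_mulVec, ← Matrix.map_mul, adjugate_mul, hM, one_smul,
    Matrix.map_one _ f.map_zero f.map_one, one_mulVec]

theorem Ideal.Quotient.mk_span_singleton_eq_iff_dvd {N a b : R} :
    Ideal.Quotient.mk (Ideal.span {N}) a = Ideal.Quotient.mk (Ideal.span {N}) b ↔ N ∣ a - b := by
  rw [Ideal.Quotient.mk_eq_mk_iff_sub_mem, Ideal.mem_span_singleton]

theorem exists_unit_mul_of_map_mulVec_eq {f : R →+* S} (hf : Function.Injective f)
    {g h : Matrix (Fin 2) (Fin 2) R} (hg : g.det = 1) (hh : h.det = 1) {l : S}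
    (heq : g.map f *ᵥ ![0, 1] = l • (h.map f *ᵥ ![0, 1])) :
    ∃ u : Rˣ, ∀ i, g i 1 = u * h i 1 := by
  set M := adjugate h * g
  have hM : M.map f *ᵥ ![0, 1] = l • ![0, 1] := by
    rw [Matrix.map_mul, ← mulVec_mulVec, heq, mulVec_smul, map_adjugate_mulVec_map_mulVec f hh]
  have hM01 : M 0 1 = 0 := by
    have h0 := congrFun hM 0
    simp only [map_mulVec_zero_one] at h0
    exact hf (by simpa using h0)
  have hdetM : M 0 0 * M 1 1 = 1 := by
    have hdet : M.det = 1 := by rw [det_mul, det_adjugate, hh, hg, one_pow, one_mul]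
    rwa [det_fin_two, hM01, zero_mul, sub_zero] at hdet
  have hgM : g = h * M := by
    rw [← Matrix.mul_assoc, mul_adjugate, hh, one_smul, Matrix.one_mul]
  refine ⟨(IsUnit.of_mul_eq_one_right _ hdetM).unit, fun i => ?_⟩
  rw [hgM, mul_apply, Fin.sum_univ_two, hM01, IsUnit.unit_spec]
  ring
end

namespace Polynomial
variable {R : Type*} [CommRing R]

theorem X_pow_dvd_X_mul_iff [IsDomain R] {n : ℕ} {p : R[X]} : X ^ n ∣ X * p ↔ X ^ (n - 1) ∣ p := by
  cases n with
  | zero => simp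
  | succ n => rw [pow_succ', mul_dvd_mul_iff_left X_ne_zero, Nat.add_sub_cancel]

theorem coeff_zero_eq_of_mk_eq {n : ℕ} (hn : n ≠ 0) {p q : R[X]}
    (h : Ideal.Quotient.mk (Ideal.span {X ^ n}) p = Ideal.Quotient.mk (Ideal.span {X ^ n}) q) :
    p.coeff 0 = q.coeff 0 := by
  rw [Ideal.Quotient.mk_span_singleton_eq_iff_dvd] at h
  rw [← sub_eq_zero, ← coeff_sub, ← X_dvd_iff]
  exact (dvd_pow_self X hn).trans h

theorem eq_of_X_pow_dvd_X_mul_sub [IsDomain R] {n : ℕ} {d d' : R[X]} (hd : d.degree < ↑(n - 1))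
    (hd' : d'.degree < ↑(n - 1)) (h : X ^ n ∣ X * (d - d')) : d = d' := by
  rw [X_pow_dvd_X_mul_iff] at h
  refine sub_eq_zero.mp (eq_zero_of_dvd_of_degree_lt h ?_)
  rw [degree_X_pow]
  exact (degree_sub_le d d').trans_lt (max_lt hd hd')

end Polynomial

section
variable {F : Type*} [Field F]

theorem mem_Gamma1_iff {N : F[X]} {γ : Matrix (Fin 2) (Fin 2) F[X]} :
    γ ∈ Gamma1 F N ↔ γ.det = 1 ∧ Ideal.Quotient.mk (Ideal.span {N}) (γ 1 0) = 0 ∧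
      Ideal.Quotient.mk (Ideal.span {N}) (γ 0 0) = 1 ∧
      Ideal.Quotient.mk (Ideal.span {N}) (γ 1 1) = 1 := by
  simp only [Gamma1, Set.mem_ofPred_eq, ← Ideal.Quotient.eq_zero_iff_dvd, map_sub, map_one,
    sub_eq_zero]

theorem isStdLift_iff {n : ℕ} {c d : F[X]} {h : Matrix (Fin 2) (Fin 2) F[X]} :
    IsStdLift F n c d h ↔ h.det = 1 ∧ Ideal.Quotient.mk (Ideal.span {X ^ n}) (h 0 1) = 0 ∧
      Ideal.Quotient.mk (Ideal.span {X ^ n}) (h 1 0) =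
        Ideal.Quotient.mk (Ideal.span {X ^ n}) (X * c) ∧
      Ideal.Quotient.mk (Ideal.span {X ^ n}) (h 1 1) =
        Ideal.Quotient.mk (Ideal.span {X ^ n}) (1 + X * d) ∧
      Ideal.Quotient.mk (Ideal.span {X ^ n}) (h 0 0) *
        Ideal.Quotient.mk (Ideal.span {X ^ n}) (1 + X * d) = 1 := by
  simp only [IsStdLift, ← Ideal.Quotient.eq_zero_iff_dvd, map_sub, map_mul, map_one, sub_eq_zero]

theorem IsStdLift.mul_adjugate_mem_Gamma1 {n : ℕ} {c d : F[X]} {h h' : Matrix (Fin 2) (Fin 2) F[X]}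
    (hh : IsStdLift F n c d h) (hh' : IsStdLift F n c d h') :
    h' * adjugate h ∈ Gamma1 F (X ^ n) := by
  rw [isStdLift_iff] at hh hh'
  obtain ⟨hdet, h01, h10, h11, h00⟩ := hh
  obtain ⟨hdet', h01', h10', h11', h00'⟩ := hh'
  refine mem_Gamma1_iff.mpr ⟨by rw [det_mul, det_adjugate, hdet, hdet', one_pow, one_mul], ?_⟩
  simp only [adjugate_fin_two, mul_apply, Fin.sum_univ_two, of_apply, cons_val', cons_val_zero,
    cons_val_one, empty_val', cons_val_fin_one, map_add, map_mul, map_neg]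
  set π := Ideal.Quotient.mk (Ideal.span {(X : F[X]) ^ n})
  refine ⟨?_, ?_, ?_⟩
  · linear_combination π (h 1 1) * h10' - π (h' 1 1) * h10 + π (X * c) * h11 - π (X * c) * h11'
  · linear_combination π (h' 0 0) * h11 + h00' - π (h 1 0) * h01'
  · linear_combination -π (h' 1 0) * h01 + π (h 0 0) * h11' + h00

theorem IsStdLift.eq_of_mulVec_eq {n : ℕ} (hn : n ≠ 0) {c c' d d' : F[X]}
    {h h' γ : Matrix (Fin 2) (Fin 2) F[X]} (hd : d.degree < ↑(n - 1)) (hd' : d'.degree < ↑(n - 1))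
    (hh : IsStdLift F n c d h) (hh' : IsStdLift F n c' d' h') (hγ : γ ∈ Gamma1 F (X ^ n))
    {l : RatFunc F}
    (heq : γ.map (algebraMap F[X] (RatFunc F)) *ᵥ (h.map (algebraMap F[X] (RatFunc F)) *ᵥ ![0, 1]) =
      l • (h'.map (algebraMap F[X] (RatFunc F)) *ᵥ ![0, 1])) :
    d = d' := by
  obtain ⟨hdet, h01, -, h11, -⟩ := isStdLift_iff.mp hh
  obtain ⟨hdet', -, -, h11', -⟩ := isStdLift_iff.mp hh'
  obtain ⟨hγdet, hγ10, -, hγ11⟩ := mem_Gamma1_iff.mp hγ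
  rw [mulVec_mulVec, ← Matrix.map_mul] at heq
  obtain ⟨u, hu⟩ := exists_unit_mul_of_map_mulVec_eq (IsFractionRing.injective F[X] (RatFunc F))
    (by rw [det_mul, hγdet, hdet, one_mul]) hdet' heq
  set π := Ideal.Quotient.mk (Ideal.span {(X : F[X]) ^ n})
  have hg : π ((γ * h) 1 1) = π (1 + X * d) := by
    simp only [mul_apply, Fin.sum_univ_two, map_add, map_mul, hγ10, hγ11, h01, h11]
    ring
  obtain ⟨α, -, hα⟩ := isUnit_iff.mp u.isUnit
  have hα1 : α = 1 := by
    have hcoeff := (coeff_zero_eq_of_mk_eq hn hg).symm.trans (congrArg (coeff · 0) (hu 1))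
    rw [← hα, coeff_C_mul, coeff_zero_eq_of_mk_eq hn h11'] at hcoeff
    simpa using hcoeff.symm
  rw [hu 1, ← hα, hα1, C_1, one_mul, h11', Ideal.Quotient.mk_span_singleton_eq_iff_dvd,
    add_sub_add_left_eq_sub, ← mul_sub] at hg
  exact (eq_of_X_pow_dvd_X_mul_sub hd' hd hg).symm

theorem exists_isStdLift_of_isCoprime (n : ℕ) {a b : F[X]} (hab : IsCoprime a b)
    (hb : X ∣ b - 1) :
    ∃ d : F[X], d.degree < ↑(n - 1) ∧ ∃ h : Matrix (Fin 2) (Fin 2) F[X], IsStdLift F n 0 d h ∧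
      ∃ y, h 0 1 = a + y * b ∧ h 1 1 = b := by
  obtain ⟨e, he⟩ := hb
  have hbX : IsCoprime b (X ^ n) := IsCoprime.pow_right ⟨1, -e, by linear_combination he⟩
  obtain ⟨c, k, hck⟩ := id hbX
  set y := -(a * c)
  have hy : a + y * b = a * k * X ^ n := by linear_combination -a * hck
  obtain ⟨u, w, huw⟩ := (hab.symm.add_mul_right_right y).mul_right hbX
  set d := e %ₘ X ^ (n - 1)
  have hbd : X ^ n ∣ b - (1 + X * d) := by
    rw [show b - (1 + X * d) = X * (e - d) by linear_combination he, X_pow_dvd_X_mul_iff]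
    exact ⟨e /ₘ X ^ (n - 1), by linear_combination (modByMonic_add_div e (X ^ (n - 1))).symm⟩
  refine ⟨d, by simpa using degree_modByMonic_lt e (monic_X_pow (n - 1)),
    !![u, a + y * b; -(w * X ^ n), b], ⟨?_, ?_, ?_, ?_, ?_⟩, y, rfl, rfl⟩
  · rw [det_fin_two_of]
    linear_combination huw
  · simp [hy]
  · simp
  · simpa using hbd
  · have : u * (1 + X * d) - 1 = -(w * (a + y * b) * X ^ n) - u * (b - (1 + X * d)) := by
      linear_combination huw
    simpa [this] using dvd_sub (dvd_mul_left _ _).neg_right (hbd.mul_left u)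

theorem exists_isStdLift_mulVec_eq_of_mem_Gamma1_X (n : ℕ) {δ : Matrix (Fin 2) (Fin 2) F[X]}
    (hδ : δ ∈ Gamma1 F X) {v : Fin 2 → RatFunc F} {m : RatFunc F}
    (hv : δ.map (algebraMap F[X] (RatFunc F)) *ᵥ v = ![0, m]) :
    ∃ d : F[X], d.degree < ↑(n - 1) ∧ ∃ h : Matrix (Fin 2) (Fin 2) F[X], IsStdLift F n 0 d h ∧
      ∃ γ ∈ Gamma1 F (X ^ n), γ.map (algebraMap F[X] (RatFunc F)) *ᵥ v =
        m • (h.map (algebraMap F[X] (RatFunc F)) *ᵥ ![0, 1]) := by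
  obtain ⟨hdet, -, hδ00, -⟩ := hδ
  have hv' : v = (adjugate δ).map (algebraMap F[X] (RatFunc F)) *ᵥ ![0, m] := by
    rw [← hv, map_adjugate_mulVec_map_mulVec _ hdet]
  rw [det_fin_two] at hdet
  obtain ⟨d, hd, h, hh, y, hy01, hy11⟩ :=
    exists_isStdLift_of_isCoprime n (a := -δ 0 1) ⟨δ 1 0, δ 1 1, by linear_combination hdet⟩ hδ00
  refine ⟨d, hd, h, hh, !![1, y; 0, 1], ⟨by simp, by simp, by simp, by simp⟩, ?_⟩
  rw [hv', map_mulVec_zero_one, hy01, hy11, adjugate_fin_two]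
  ext i
  fin_cases i <;> simp [mulVec, dotProduct] <;> ring
end

set_option synthInstance.maxHeartbeats 1000000 in
theorem stmt7_general (F : Type*) [Field F]
    (n : ℕ) (hn : 1 ≤ n) :
    (∀ d d' : Polynomial F, ∀ h h' : Matrix (Fin 2) (Fin 2) (Polynomial F),
      d.degree < ((n - 1 : ℕ) : WithBot ℕ) → d'.degree < ((n - 1 : ℕ) : WithBot ℕ) →
      IsStdLift F n 0 d h → IsStdLift F n 0 d' h' →
      ((∃ γ ∈ Gamma1 F ((X : Polynomial F) ^ n), ∃ l : RatFunc F, l ≠ 0 ∧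
          (γ.map (algebraMap (Polynomial F) (RatFunc F))).mulVec
            ((h.map (algebraMap (Polynomial F) (RatFunc F))).mulVec
              (![0, 1] : Fin 2 → RatFunc F)) =
          l • ((h'.map (algebraMap (Polynomial F) (RatFunc F))).mulVec
              (![0, 1] : Fin 2 → RatFunc F))) ↔ d = d')) ∧
    (∀ v : Fin 2 → RatFunc F, v ≠ 0 →
      (∃ δ ∈ Gamma1 F (X : Polynomial F), ∃ m : RatFunc F, m ≠ 0 ∧
        (δ.map (algebraMap (Polynomial F) (RatFunc F))).mulVec v = ![0, m]) →
      ∃ d : Polynomial F, d.degree < ((n - 1 : ℕ) : WithBot ℕ) ∧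
        ∃ h : Matrix (Fin 2) (Fin 2) (Polynomial F), IsStdLift F n 0 d h ∧
          ∃ γ ∈ Gamma1 F ((X : Polynomial F) ^ n), ∃ l : RatFunc F, l ≠ 0 ∧
            (γ.map (algebraMap (Polynomial F) (RatFunc F))).mulVec v =
              l • ((h.map (algebraMap (Polynomial F) (RatFunc F))).mulVec
                (![0, 1] : Fin 2 → RatFunc F))) := by
  refine ⟨fun d d' h h' hd hd' hh hh' => ⟨?_, ?_⟩, ?_⟩
  · rintro ⟨γ, hγ, l, -, heq⟩
    exact hh.eq_of_mulVec_eq (by omega) hd hd' hh' hγ heq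
  · rintro rfl
    refine ⟨h' * adjugate h, hh.mul_adjugate_mem_Gamma1 hh', 1, one_ne_zero, ?_⟩
    rw [one_smul, Matrix.map_mul, ← mulVec_mulVec, map_adjugate_mulVec_map_mulVec _ hh.1]
  · rintro v - ⟨δ, hδ, m, hm, hδv⟩
    obtain ⟨d, hd, h, hh, γ, hγ, hγv⟩ := exists_isStdLift_mulVec_eq_of_mem_Gamma1_X n hδ hδv
    exact ⟨d, hd, h, hh, γ, hγ, m, hm, hγv⟩

set_option synthInstance.maxHeartbeats 1000000 in
theorem stmt7 (p : ℕ) (hp : p.Prime) (F : Type*) [Field F] [Fintype F] [CharP F p]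
    (n : ℕ) (hn : 1 ≤ n) :
    (∀ d d' : Polynomial F, ∀ h h' : Matrix (Fin 2) (Fin 2) (Polynomial F),
      d.degree < ((n - 1 : ℕ) : WithBot ℕ) → d'.degree < ((n - 1 : ℕ) : WithBot ℕ) →
      IsStdLift F n 0 d h → IsStdLift F n 0 d' h' →
      ((∃ γ ∈ Gamma1 F ((X : Polynomial F) ^ n), ∃ l : RatFunc F, l ≠ 0 ∧
          (γ.map (algebraMap (Polynomial F) (RatFunc F))).mulVec
            ((h.map (algebraMap (Polynomial F) (RatFunc F))).mulVec
              (![0, 1] : Fin 2 → RatFunc F)) =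
          l • ((h'.map (algebraMap (Polynomial F) (RatFunc F))).mulVec
              (![0, 1] : Fin 2 → RatFunc F))) ↔ d = d')) ∧
    (∀ v : Fin 2 → RatFunc F, v ≠ 0 →
      (∃ δ ∈ Gamma1 F (X : Polynomial F), ∃ m : RatFunc F, m ≠ 0 ∧
        (δ.map (algebraMap (Polynomial F) (RatFunc F))).mulVec v = ![0, m]) →
      ∃ d : Polynomial F, d.degree < ((n - 1 : ℕ) : WithBot ℕ) ∧
        ∃ h : Matrix (Fin 2) (Fin 2) (Polynomial F), IsStdLift F n 0 d h ∧
          ∃ γ ∈ Gamma1 F ((X : Polynomial F) ^ n), ∃ l : RatFunc F, l ≠ 0 ∧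
            (γ.map (algebraMap (Polynomial F) (RatFunc F))).mulVec v =
              l • ((h.map (algebraMap (Polynomial F) (RatFunc F))).mulVec
                (![0, 1] : Fin 2 → RatFunc F))) :=
  stmt7_general F n hn
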